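/- Fix α > 0 and let ρ: ℝ → (0,1) be continuous with ∫_{−∞}^{0} (1−ρ(w)) dw < ∞ and ∫_{0}^{∞} ρ(w) dw < ∞. Assume there exist C₁ ≥ C₂ > 0 such that ρ^∞(v;C₂) ≤ ρ(v) ≤ ρ^∞(v;C₁) for all v ∈ ℝ. Define ρ_U(u) := (1 − ρ(ζ^{-1}(u)))^{-1} − 1 for u > 0, where ζ(v) = ∫_{−∞}^{v} (1−ρ(w)) dw. Then (C₂/C₁)·ρ_U^∞(u) ≤ ρ_U(u) ≤ (C₁/C₂)·ρ_U^∞(u) for all u > 0. -/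

import Mathlib

open Real MeasureTheory Set Filter

/-- `ρ_U^∞(u) = 1/(e^{αu} - 1)`. -/
noncomputable def rhoUInf (α u : ℝ) : ℝ := 1 / (Real.exp (α * u) - 1)

/-- `ρ^∞(v; C) = C/(e^{αv} + C)`. -/
noncomputable def rhoInf (α v C : ℝ) : ℝ := C / (Real.exp (α * v) + C)

/-- `ζ(v) = ∫_{-∞}^v (1 - ρ(w)) dw`. -/
noncomputable def zetaFn (ρ : ℝ → ℝ) (v : ℝ) : ℝ := ∫ w in Set.Iic v, (1 - ρ w)

/-- The inverse of `ζ`. -/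
noncomputable def zetaInv (ρ : ℝ → ℝ) (u : ℝ) : ℝ := Function.invFun (zetaFn ρ) u

/-- `ρ_U(u) = (1 - ρ(ζ⁻¹(u)))⁻¹ - 1`. -/
noncomputable def rhoUOf (ρ : ℝ → ℝ) (u : ℝ) : ℝ := (1 - ρ (zetaInv ρ u))⁻¹ - 1

/-!
The bounds `ρ^∞(·; C₂) ≤ ρ ≤ ρ^∞(·; C₁)` sandwich the integrand `1 - ρ` of `ζ`, so `ζ` lies
between the explicit primitives `ζ^∞(v; C) = α⁻¹ log (1 + e^{αv} / C)` for `C = C₁, C₂`.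
At `v = ζ⁻¹(u)` this gives `C₂ (e^{αu} - 1) ≤ e^{αv} ≤ C₁ (e^{αu} - 1)`. On the other hand
`ρ_U(u) = ρ(v) / (1 - ρ(v))` is increasing in `ρ(v)` and equals `C e^{-αv}` when
`ρ = ρ^∞(·; C)`, so `C₂ e^{-αv} ≤ ρ_U(u) ≤ C₁ e^{-αv}`.
-/

open Topology

noncomputable def zetaInf (α C v : ℝ) : ℝ := log (1 + exp (α * v) / C) / α

lemma inv_one_sub_sub_one_le {r s : ℝ} (hrs : r ≤ s) (hs : s < 1) :
    (1 - r)⁻¹ - 1 ≤ (1 - s)⁻¹ - 1 :=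
  sub_le_sub_right (inv_anti₀ (sub_pos.2 hs) (sub_le_sub_left hrs 1)) 1

lemma div_mul_rhoUInf (α u C C' : ℝ) :
    C / C' * rhoUInf α u = C / (C' * (exp (α * u) - 1)) := by
  rw [rhoUInf, div_mul_div_comm, mul_one]

section rhoInf

variable {α C : ℝ}

lemma continuous_rhoInf (hC : 0 < C) : Continuous fun v => rhoInf α v C :=
  continuous_const.div (by fun_prop) fun v => by positivity

lemma rhoInf_lt_one (hC : 0 < C) (v : ℝ) : rhoInf α v C < 1 := by
  rw [rhoInf, div_lt_one (by positivity)]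
  linarith [exp_pos (α * v)]

lemma one_sub_rhoInf (hC : 0 < C) (v : ℝ) :
    1 - rhoInf α v C = exp (α * v) / (exp (α * v) + C) := by
  rw [rhoInf]
  field_simp
  ring

lemma inv_one_sub_rhoInf_sub_one (hC : 0 < C) (v : ℝ) :
    (1 - rhoInf α v C)⁻¹ - 1 = C / exp (α * v) := by
  rw [one_sub_rhoInf hC, inv_div]
  field_simp
  ring

lemma integrableOn_one_sub_rhoInf_Iic (hα : 0 < α) (hC : 0 < C) (v : ℝ) :
    IntegrableOn (fun w => 1 - rhoInf α w C) (Iic v) := by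
  refine ((integrableOn_exp_mul_Iic hα v).div_const C).mono'
    (continuous_const.sub (continuous_rhoInf hC)).aestronglyMeasurable ?_
  filter_upwards with w
  rw [one_sub_rhoInf hC, norm_of_nonneg (by positivity)]
  exact div_le_div_of_nonneg_left (exp_pos _).le hC (by linarith [exp_pos (α * w)])

lemma hasDerivAt_zetaInf (hα : α ≠ 0) (hC : 0 < C) (v : ℝ) :
    HasDerivAt (zetaInf α C) (1 - rhoInf α v C) v := by
  have h := ((((hasDerivAt_id' v).const_mul α).exp.div_const C).const_add 1).log
    (by positivity) |>.div_const α
  refine h.congr_deriv ?_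
  rw [one_sub_rhoInf hC]
  field_simp
  ring

lemma tendsto_zetaInf_atBot (hα : 0 < α) : Tendsto (zetaInf α C) atBot (𝓝 0) := by
  have h : Tendsto (fun v => 1 + exp (α * v) / C) atBot (𝓝 1) := by
    simpa using ((tendsto_exp_atBot.comp (tendsto_id.const_mul_atBot hα)).div_const C).const_add 1
  have h' := ((continuousAt_log one_ne_zero).tendsto.comp h).div_const α
  rwa [log_one, zero_div] at h'

lemma zetaFn_rhoInf (hα : 0 < α) (hC : 0 < C) (v : ℝ) :
    zetaFn (fun w => rhoInf α w C) v = zetaInf α C v := by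
  rw [zetaFn, integral_Iic_of_hasDerivAt_of_tendsto' (fun w _ => hasDerivAt_zetaInf hα.ne' hC w)
    (integrableOn_one_sub_rhoInf_Iic hα hC v) (tendsto_zetaInf_atBot hα), sub_zero]

lemma zetaInf_le_iff (hα : 0 < α) (hC : 0 < C) {u v : ℝ} :
    zetaInf α C v ≤ u ↔ exp (α * v) ≤ C * (exp (α * u) - 1) := by
  rw [zetaInf, div_le_iff₀ hα, log_le_iff_le_exp (by positivity), mul_comm u,
    ← le_sub_iff_add_le', div_le_iff₀ hC, mul_comm (_ - 1)]

lemma le_zetaInf_iff (hα : 0 < α) (hC : 0 < C) {u v : ℝ} :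
    u ≤ zetaInf α C v ↔ C * (exp (α * u) - 1) ≤ exp (α * v) := by
  rw [zetaInf, le_div_iff₀ hα, le_log_iff_exp_le (by positivity), mul_comm u,
    ← sub_le_iff_le_add', le_div_iff₀ hC, mul_comm (_ - 1)]

lemma zetaInf_log (hα : 0 < α) (hC : 0 < C) {u : ℝ} (hu : 0 < u) :
    zetaInf α C (log (C * (exp (α * u) - 1)) / α) = u := by
  have hU : 0 < exp (α * u) - 1 := sub_pos.2 (one_lt_exp_iff.2 (mul_pos hα hu))
  rw [zetaInf, mul_div_cancel₀ _ hα.ne', exp_log (by positivity), mul_div_cancel_left₀ _ hC.ne',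
    add_sub_cancel, log_exp, mul_div_cancel_left₀ _ hα.ne']

end rhoInf

section zetaFn

variable {ρ : ℝ → ℝ}

lemma integrableOn_one_sub_Iic_of_rhoInf_le {α C : ℝ} (hα : 0 < α) (hC : 0 < C)
    (hρ : Continuous ρ) (hlow : ∀ w, rhoInf α w C ≤ ρ w) (hle : ∀ w, ρ w ≤ 1) (v : ℝ) :
    IntegrableOn (fun w => 1 - ρ w) (Iic v) :=
  integrable_of_le_of_le (continuous_const.sub hρ).aestronglyMeasurable
    (ae_of_all _ fun w => sub_nonneg.2 (hle w))
    (ae_of_all _ fun w => sub_le_sub_left (hlow w) 1)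
    (integrable_zero _ _ _) (integrableOn_one_sub_rhoInf_Iic hα hC v)

lemma zetaFn_le_zetaFn {ρ' : ℝ → ℝ} {v : ℝ} (h : ∀ w, ρ w ≤ ρ' w)
    (hρ : IntegrableOn (fun w => 1 - ρ w) (Iic v))
    (hρ' : IntegrableOn (fun w => 1 - ρ' w) (Iic v)) :
    zetaFn ρ' v ≤ zetaFn ρ v :=
  setIntegral_mono hρ' hρ fun w => sub_le_sub_left (h w) 1

lemma continuous_zetaFn (hint : ∀ v, IntegrableOn (fun w => 1 - ρ w) (Iic v)) :
    Continuous (zetaFn ρ) := by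
  have h : zetaFn ρ = fun v => zetaFn ρ 0 + ∫ w in (0 : ℝ)..v, (1 - ρ w) := by
    funext v
    rw [← intervalIntegral.integral_Iic_sub_Iic (hint 0) (hint v), zetaFn, zetaFn,
      add_sub_cancel]
  rw [h]
  exact continuous_const.add (intervalIntegral.continuous_primitive
    (fun a b => ((hint (max a b)).mono_set Icc_subset_Iic_self).intervalIntegrable) 0)

lemma zetaFn_zetaInv_of_le_of_le {g h : ℝ → ℝ} {a b u : ℝ}
    (hint : ∀ v, IntegrableOn (fun w => 1 - ρ w) (Iic v))
    (hg : ∀ v, g v ≤ zetaFn ρ v) (hh : ∀ v, zetaFn ρ v ≤ h v) (ha : h a = u) (hb : g b = u) :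
    zetaFn ρ (zetaInv ρ u) = u := by
  obtain ⟨v, -, hv⟩ := intermediate_value_uIcc (continuous_zetaFn hint).continuousOn
    (mem_uIcc_of_le (ha ▸ hh a) (hb ▸ hg b))
  exact Function.invFun_eq ⟨v, hv⟩

lemma zetaInf_le_zetaFn {α C v : ℝ} (hα : 0 < α) (hC : 0 < C) (h : ∀ w, ρ w ≤ rhoInf α w C)
    (hρ : IntegrableOn (fun w => 1 - ρ w) (Iic v)) : zetaInf α C v ≤ zetaFn ρ v := by
  rw [← zetaFn_rhoInf hα hC]
  exact zetaFn_le_zetaFn h hρ (integrableOn_one_sub_rhoInf_Iic hα hC v)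

lemma zetaFn_le_zetaInf {α C v : ℝ} (hα : 0 < α) (hC : 0 < C) (h : ∀ w, rhoInf α w C ≤ ρ w)
    (hρ : IntegrableOn (fun w => 1 - ρ w) (Iic v)) : zetaFn ρ v ≤ zetaInf α C v := by
  rw [← zetaFn_rhoInf hα hC]
  exact zetaFn_le_zetaFn h (integrableOn_one_sub_rhoInf_Iic hα hC v) hρ

end zetaFn

theorem rhoU_bounds_from_rho_bounds_general (α : ℝ) (hα : 0 < α)
    (ρ : ℝ → ℝ) (hcont : Continuous ρ)
    (C₁ C₂ : ℝ) (hC : C₂ ≤ C₁) (hC₂ : 0 < C₂)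
    (hbound : ∀ v : ℝ, rhoInf α v C₂ ≤ ρ v ∧ ρ v ≤ rhoInf α v C₁) :
    ∀ u > (0:ℝ),
      (C₂ / C₁) * rhoUInf α u ≤ rhoUOf ρ u ∧ rhoUOf ρ u ≤ (C₁ / C₂) * rhoUInf α u := by
  intro u hu
  have hC₁ : 0 < C₁ := hC₂.trans_le hC
  have hρ_lt_one : ∀ w, ρ w < 1 := fun w => (hbound w).2.trans_lt (rhoInf_lt_one hC₁ w)
  have hint : ∀ v, IntegrableOn (fun w => 1 - ρ w) (Iic v) :=
    integrableOn_one_sub_Iic_of_rhoInf_le hα hC₂ hcont (fun w => (hbound w).1)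
      fun w => (hρ_lt_one w).le
  have hζ₁ v : zetaInf α C₁ v ≤ zetaFn ρ v :=
    zetaInf_le_zetaFn hα hC₁ (fun w => (hbound w).2) (hint v)
  have hζ₂ v : zetaFn ρ v ≤ zetaInf α C₂ v :=
    zetaFn_le_zetaInf hα hC₂ (fun w => (hbound w).1) (hint v)
  have hζu := zetaFn_zetaInv_of_le_of_le hint hζ₁ hζ₂ (zetaInf_log hα hC₂ hu)
    (zetaInf_log hα hC₁ hu)
  set v := zetaInv ρ u
  have hE₁ : exp (α * v) ≤ C₁ * (exp (α * u) - 1) := (zetaInf_le_iff hα hC₁).1 (hζu ▸ hζ₁ v)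
  have hE₂ : C₂ * (exp (α * u) - 1) ≤ exp (α * v) := (le_zetaInf_iff hα hC₂).1 (hζu ▸ hζ₂ v)
  have hU : 0 < exp (α * u) - 1 := sub_pos.2 (one_lt_exp_iff.2 (mul_pos hα hu))
  rw [div_mul_rhoUInf, div_mul_rhoUInf]
  constructor
  · calc C₂ / (C₁ * (exp (α * u) - 1)) ≤ C₂ / exp (α * v) :=
          div_le_div_of_nonneg_left hC₂.le (exp_pos _) hE₁
      _ = (1 - rhoInf α v C₂)⁻¹ - 1 := (inv_one_sub_rhoInf_sub_one hC₂ v).symm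
      _ ≤ rhoUOf ρ u := inv_one_sub_sub_one_le (hbound v).1 (hρ_lt_one v)
  · calc rhoUOf ρ u ≤ (1 - rhoInf α v C₁)⁻¹ - 1 :=
          inv_one_sub_sub_one_le (hbound v).2 (rhoInf_lt_one hC₁ v)
      _ = C₁ / exp (α * v) := inv_one_sub_rhoInf_sub_one hC₁ v
      _ ≤ C₁ / (C₂ * (exp (α * u) - 1)) :=
          div_le_div_of_nonneg_left hC₁.le (mul_pos hC₂ hU) hE₂

theorem rhoU_bounds_from_rho_bounds (α : ℝ) (hα : 0 < α)
    (ρ : ℝ → ℝ) (hcont : Continuous ρ)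
    (hrange : ∀ w, ρ w ∈ Set.Ioo (0:ℝ) 1)
    (hint1 : MeasureTheory.IntegrableOn (fun w => 1 - ρ w) (Set.Iic 0))
    (hint2 : MeasureTheory.IntegrableOn ρ (Set.Ioi 0))
    (C₁ C₂ : ℝ) (hC : C₂ ≤ C₁) (hC₂ : 0 < C₂)
    (hbound : ∀ v : ℝ, rhoInf α v C₂ ≤ ρ v ∧ ρ v ≤ rhoInf α v C₁) :
    ∀ u > (0:ℝ),
      (C₂ / C₁) * rhoUInf α u ≤ rhoUOf ρ u ∧ rhoUOf ρ u ≤ (C₁ / C₂) * rhoUInf α u :=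
  rhoU_bounds_from_rho_bounds_general α hα ρ hcont C₁ C₂ hC hC₂ hbound
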